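/- arXiv:1111.7284 — 2 statements merged into one kernel-verified Lean document; each statement's English description precedes it below -/
import Mathlib

section
/- Let 𝔥 be a fat indecomposable Hoffman graph with smallest eigenvalue λ_min(𝔥) ≥ −1−τ. If some slim vertex of 𝔥 has at least two fat neighbors, then 𝔥 has at most two slim vertices; that is, the special graph S(𝔥) is isomorphic to Q_{0,0,1} (a single vertex), Q_{1,0,1} (two vertices joined by a (+)-edge), or Q_{0,1,1} (two vertices joined by a (−)-edge). -/
/-- A Hoffman graph: a finite simple graph whose vertices are labeled slim or fat,
such that fat vertices are pairwise non-adjacent and every fat vertex is adjacent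
to at least one slim vertex. -/
structure HoffmanGraph (V : Type*) where
  adj : V → V → Prop
  symm : ∀ {x y : V}, adj x y → adj y x
  loopless : ∀ x : V, ¬ adj x x
  fat : V → Prop
  fat_slim : ∀ x : V, fat x → ∃ y : V, adj x y ∧ ¬ fat y
  fat_nonadj : ∀ x y : V, fat x → fat y → ¬ adj x y

/-- The smallest eigenvalue of a real matrix (the infimum of its set of real
eigenvalues); for a real symmetric matrix on a nonempty finite index type this is
the least eigenvalue. -/
noncomputable def minEig {n : Type*} [Fintype n] (M : Matrix n n ℝ) : ℝ :=
  sInf {t : ℝ | ∃ v : n → ℝ, v ≠ 0 ∧ M.mulVec v = t • v}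

namespace HoffmanGraph

variable {V : Type*}

/-- The type of slim vertices. -/
abbrev Slim (H : HoffmanGraph V) : Type _ := {x : V // ¬ H.fat x}

/-- The type of fat vertices. -/
abbrev FatV (H : HoffmanGraph V) : Type _ := {x : V // H.fat x}

noncomputable instance (priority := 50) instFintypeSlim [Finite V] {H : HoffmanGraph V} :
    Fintype H.Slim := Fintype.ofFinite _

noncomputable instance (priority := 50) instFintypeFatV [Finite V] {H : HoffmanGraph V} :
    Fintype H.FatV := Fintype.ofFinite _

/-- The set of fat neighbors `N^f(x)` of a vertex. -/
def fatNbrs (H : HoffmanGraph V) (x : V) : Set V := {f | H.fat f ∧ H.adj x f}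

/-- The set of common fat neighbors `N^f(x) ∩ N^f(y)` of two vertices. -/
def commonFat (H : HoffmanGraph V) (x y : V) : Set V :=
  {f | H.fat f ∧ H.adj x f ∧ H.adj y f}

lemma commonFat_comm (H : HoffmanGraph V) (x y : V) :
    H.commonFat x y = H.commonFat y x := by
  ext f; simp only [commonFat, Set.mem_setOf_eq]; tauto

/-- The degree of a vertex. -/
noncomputable def degree (H : HoffmanGraph V) (x : V) : ℕ := {y | H.adj x y}.ncard

/-- The matrix `B(𝔥) = A_s - C Cᵀ`, written entrywise:
`B x y = A_s x y - |N^f(x) ∩ N^f(y)|`. -/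
noncomputable def B (H : HoffmanGraph V) : Matrix H.Slim H.Slim ℝ := by
  classical
  exact Matrix.of fun x y =>
    (if H.adj x.1 y.1 then (1 : ℝ) else 0) - ((H.commonFat x.1 y.1).ncard : ℝ)

/-- `λ_min(𝔥)`: the smallest eigenvalue of `B(𝔥)`. -/
noncomputable def lamMin [Finite V] (H : HoffmanGraph V) : ℝ := minEig H.B

/-- The adjacency matrix of the slim subgraph of `𝔥` (equivalently, the `B`-matrix
of the slim subgraph regarded as a slim Hoffman graph). -/
noncomputable def slimAdjMatrix (H : HoffmanGraph V) : Matrix H.Slim H.Slim ℝ := by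
  classical
  exact Matrix.of fun x y => if H.adj x.1 y.1 then (1 : ℝ) else 0

/-- A Hoffman graph is fat if every slim vertex has a fat neighbor. -/
def IsFat (H : HoffmanGraph V) : Prop :=
  ∀ x : V, ¬ H.fat x → ∃ f : V, H.fat f ∧ H.adj x f

end HoffmanGraph

/-- An embedding exhibiting `G` as an induced Hoffman subgraph of `H`:
an injection preserving adjacency, non-adjacency, and the slim/fat labeling. -/
structure HoffmanEmbedding {V W : Type*} (G : HoffmanGraph V) (H : HoffmanGraph W) where
  toFun : V → W
  inj : Function.Injective toFun
  adj_iff : ∀ x y : V, G.adj x y ↔ H.adj (toFun x) (toFun y)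
  fat_iff : ∀ x : V, G.fat x ↔ H.fat (toFun x)

/-- An isomorphism of Hoffman graphs. -/
structure HoffmanIso {V W : Type*} (G : HoffmanGraph V) (H : HoffmanGraph W) where
  toEquiv : V ≃ W
  adj_iff : ∀ x y : V, G.adj x y ↔ H.adj (toEquiv x) (toEquiv y)
  fat_iff : ∀ x : V, G.fat x ↔ H.fat (toEquiv x)

namespace HoffmanGraph

variable {V : Type*}

/-- The induced Hoffman subgraph on a set `W` of vertices, provided every fat
vertex of `W` keeps a slim neighbor inside `W`. -/
def induce (H : HoffmanGraph V) (W : Finset V)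
    (hW : ∀ y ∈ W, H.fat y → ∃ x ∈ W, ¬ H.fat x ∧ H.adj y x) :
    HoffmanGraph {v : V // v ∈ W} where
  adj x y := H.adj x.1 y.1
  symm := @fun x y h => H.symm h
  loopless x h := H.loopless x.1 h
  fat x := H.fat x.1
  fat_slim x hx := by
    obtain ⟨z, hzW, hz1, hz2⟩ := hW x.1 x.2 hx
    exact ⟨⟨z, hzW⟩, hz2, hz1⟩
  fat_nonadj x y hx hy := H.fat_nonadj x.1 y.1 hx hy

/-- A decomposition of a Hoffman graph `H` into the family of induced Hoffman
subgraphs on the (nonempty) vertex sets `W i`. -/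
structure IsDecomposition (H : HoffmanGraph V) {ι : Type*} (W : ι → Finset V) : Prop where
  nonempty : ∀ i, (W i).Nonempty
  cover : ∀ v : V, ∃ i, v ∈ W i
  slim_disj : ∀ i j, i ≠ j → ∀ x : V, ¬ H.fat x → x ∈ W i → x ∈ W j → False
  fat_closed : ∀ i, ∀ x y : V, x ∈ W i → ¬ H.fat x → H.fat y → H.adj x y → y ∈ W i
  part_fat : ∀ i, ∀ y ∈ W i, H.fat y → ∃ x ∈ W i, ¬ H.fat x ∧ H.adj y x
  cross : ∀ i j, i ≠ j → ∀ x y : V, x ∈ W i → y ∈ W j → ¬ H.fat x → ¬ H.fat y →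
    (H.commonFat x y).ncard ≤ 1 ∧ ((H.commonFat x y).ncard = 1 ↔ H.adj x y)

/-- A Hoffman graph is decomposable if it admits a decomposition into `n ≥ 2` parts. -/
def Decomposable (H : HoffmanGraph V) : Prop :=
  ∃ n : ℕ, 2 ≤ n ∧ ∃ W : Fin n → Finset V, H.IsDecomposition W

/-- `α`-reducibility: `λ_min(H) ≥ α` and there is a Hoffman graph `H'` containing `H`
as an induced Hoffman subgraph together with a decomposition `{𝔥¹, 𝔥²}` of `H'` whose
parts have smallest eigenvalue at least `α` and whose slim vertex sets both meet the
slim vertex set of `H`. -/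
def AlphaReducible [Finite V] (H : HoffmanGraph V) (α : ℝ) : Prop :=
  H.lamMin ≥ α ∧
  ∃ (V' : Type) (_ : Finite V') (H' : HoffmanGraph V') (e : HoffmanEmbedding H H')
    (W : Fin 2 → Finset V') (hD : H'.IsDecomposition W),
    (∀ i, (H'.induce (W i) (hD.part_fat i)).lamMin ≥ α) ∧
    (∀ i, ∃ v : V, ¬ H.fat v ∧ e.toFun v ∈ W i)

/-- `α`-irreducibility: `λ_min(H) ≥ α` and `H` is not `α`-reducible. -/
def AlphaIrreducible [Finite V] (H : HoffmanGraph V) (α : ℝ) : Prop :=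
  H.lamMin ≥ α ∧ ¬ H.AlphaReducible α

end HoffmanGraph

/-- An edge-signed graph: a simple graph whose edge set is partitioned into
`(+)`-edges and `(−)`-edges. -/
structure EdgeSignedGraph (V : Type*) where
  pos : V → V → Prop
  neg : V → V → Prop
  pos_symm : ∀ {x y : V}, pos x y → pos y x
  neg_symm : ∀ {x y : V}, neg x y → neg y x
  pos_irrefl : ∀ x : V, ¬ pos x x
  neg_irrefl : ∀ x : V, ¬ neg x x
  pos_neg : ∀ x y : V, pos x y → neg x y → False

namespace EdgeSignedGraph

variable {V : Type*}

/-- The signed adjacency matrix: `1` on `(+)`-edges, `−1` on `(−)`-edges, `0` otherwise. -/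
noncomputable def M (S : EdgeSignedGraph V) : Matrix V V ℝ := by
  classical
  exact Matrix.of fun x y => if S.pos x y then (1 : ℝ) else if S.neg x y then -1 else 0

/-- The underlying simple graph of an edge-signed graph. -/
def toSimpleGraph (S : EdgeSignedGraph V) : SimpleGraph V where
  Adj x y := S.pos x y ∨ S.neg x y
  symm := ⟨fun x y h => h.elim (fun h => Or.inl (S.pos_symm h)) (fun h => Or.inr (S.neg_symm h))⟩
  loopless := ⟨fun x h => h.elim (S.pos_irrefl x) (S.neg_irrefl x)⟩

/-- `S.HasInduced T`: the edge-signed graph `S` contains an induced edge-signed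
subgraph isomorphic to `T`. -/
def HasInduced {W : Type*} (S : EdgeSignedGraph V) (T : EdgeSignedGraph W) : Prop :=
  ∃ f : W → V, Function.Injective f ∧
    (∀ x y : W, T.pos x y ↔ S.pos (f x) (f y)) ∧
    (∀ x y : W, T.neg x y ↔ S.neg (f x) (f y))

end EdgeSignedGraph

/-- An isomorphism of edge-signed graphs. -/
structure EdgeSignedIso {V W : Type*} (S : EdgeSignedGraph V) (T : EdgeSignedGraph W) where
  toEquiv : V ≃ W
  pos_iff : ∀ x y : V, S.pos x y ↔ T.pos (toEquiv x) (toEquiv y)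
  neg_iff : ∀ x y : V, S.neg x y ↔ T.neg (toEquiv x) (toEquiv y)

/-- The special graph `S(𝔥)` of a Hoffman graph: the edge-signed graph on the slim
vertices where adjacent vertices with no common fat neighbor form a `(+)`-edge, and
non-adjacent vertices with a common fat neighbor form a `(−)`-edge. -/
def HoffmanGraph.special {V : Type*} (H : HoffmanGraph V) : EdgeSignedGraph H.Slim where
  pos x y := H.adj x.1 y.1 ∧ H.commonFat x.1 y.1 = ∅
  neg x y := x ≠ y ∧ ¬ H.adj x.1 y.1 ∧ (H.commonFat x.1 y.1).Nonempty
  pos_symm := @fun x y h => ⟨H.symm h.1, by rw [H.commonFat_comm]; exact h.2⟩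
  neg_symm := @fun x y h =>
    ⟨h.1.symm, fun ha => h.2.1 (H.symm ha), by rw [H.commonFat_comm]; exact h.2.2⟩
  pos_irrefl x h := H.loopless x.1 h.1
  neg_irrefl x h := h.1 rfl
  pos_neg x y hp hn := hn.2.1 hp.1

/-- The edge-signed graph `Q_{p,q,r}`: a `(+)`-clique `V_r = Fin r`, a set
`V_p = Fin p` matched by `(+)`-edges to the first `p` vertices of `V_r`, and a set
`V_q = Fin q` matched by `(−)`-edges to the next `q` vertices of `V_r`. -/
def Q (p q r : ℕ) : EdgeSignedGraph (Fin p ⊕ Fin q ⊕ Fin r) where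
  pos x y :=
    (∃ (i : Fin p) (k : Fin r), x = Sum.inl i ∧ y = Sum.inr (Sum.inr k) ∧ (k : ℕ) = (i : ℕ)) ∨
    (∃ (i : Fin p) (k : Fin r), y = Sum.inl i ∧ x = Sum.inr (Sum.inr k) ∧ (k : ℕ) = (i : ℕ)) ∨
    (∃ (k l : Fin r), x = Sum.inr (Sum.inr k) ∧ y = Sum.inr (Sum.inr l) ∧ k ≠ l)
  neg x y :=
    (∃ (j : Fin q) (k : Fin r),
      x = Sum.inr (Sum.inl j) ∧ y = Sum.inr (Sum.inr k) ∧ (k : ℕ) = p + (j : ℕ)) ∨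
    (∃ (j : Fin q) (k : Fin r),
      y = Sum.inr (Sum.inl j) ∧ x = Sum.inr (Sum.inr k) ∧ (k : ℕ) = p + (j : ℕ))
  pos_symm := @fun x y h => by
    rcases h with ⟨i, k, h1, h2, h3⟩ | ⟨i, k, h1, h2, h3⟩ | ⟨k, l, h1, h2, h3⟩
    · exact Or.inr (Or.inl ⟨i, k, h1, h2, h3⟩)
    · exact Or.inl ⟨i, k, h1, h2, h3⟩
    · exact Or.inr (Or.inr ⟨l, k, h2, h1, h3.symm⟩)
  neg_symm := @fun x y h => by
    rcases h with ⟨j, k, h1, h2, h3⟩ | ⟨j, k, h1, h2, h3⟩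
    · exact Or.inr ⟨j, k, h1, h2, h3⟩
    · exact Or.inl ⟨j, k, h1, h2, h3⟩
  pos_irrefl x h := by
    rcases h with ⟨i, k, h1, h2, h3⟩ | ⟨i, k, h1, h2, h3⟩ | ⟨k, l, h1, h2, h3⟩ <;>
      subst h1 <;> simp_all
  neg_irrefl x h := by
    rcases h with ⟨j, k, h1, h2, h3⟩ | ⟨j, k, h1, h2, h3⟩ <;> subst h1 <;> simp_all
  pos_neg x y hp hn := by
    rcases hp with ⟨i, k, h1, h2, h3⟩ | ⟨i, k, h1, h2, h3⟩ | ⟨k, l, h1, h2, h3⟩ <;>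
      rcases hn with ⟨j, m, g1, g2, g3⟩ | ⟨j, m, g1, g2, g3⟩ <;> subst h1 <;> simp_all

/-- The edge-signed triangle `T₁` with exactly one `(+)`-edge and two `(−)`-edges. -/
def T1 : EdgeSignedGraph (Fin 3) where
  pos x y := (x = 0 ∧ y = 1) ∨ (x = 1 ∧ y = 0)
  neg x y := x ≠ y ∧ (x = 2 ∨ y = 2)
  pos_symm := @fun x y h => by tauto
  neg_symm := @fun x y h => ⟨h.1.symm, h.2.symm⟩
  pos_irrefl x h := by
    rcases h with ⟨h1, h2⟩ | ⟨h1, h2⟩ <;> subst h1 <;> exact absurd h2 (by decide)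
  neg_irrefl x h := h.1 rfl
  pos_neg x y hp hn := by
    rcases hp with ⟨h1, h2⟩ | ⟨h1, h2⟩ <;> subst h1 <;> subst h2 <;>
      exact absurd hn.2 (by decide)

/-- The golden ratio `τ = (1 + √5)/2`. -/
noncomputable def goldenRatio' : ℝ := (1 + Real.sqrt 5) / 2

/-!
Since `B(𝔥) - λ_min I` is positive semidefinite, every test vector `v` satisfies
`vᵀ B v ≥ λ_min ‖v‖²`, and here `λ_min ≥ -1 - φ > -3` with `φ = τ`. Unit vectors show that every
slim vertex has at most two fat neighbours, and the vectors `e_u ± e_w` show that two slim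
vertices with two fat neighbours each have `B_uw = 0`, i.e. they satisfy condition (iv) of a
decomposition.

Let `x` have two fat neighbours. If `x` is not the only slim vertex, indecomposability gives a
slim `y` violating (iv) with `x`; then `y` has exactly one fat neighbour and `B_xy = ±1`. The
vector `B_xy e_x + ψ e_y` attains the bound `-1 - φ`, so it is an eigenvector of `B`. As `B` is
integral and `ψ = (1 - √5)/2` is irrational, every other slim vertex `z` has `B_zx = B_zy = 0`,
so `{x, y}` would split off as a part of a decomposition: there is no such `z`.
-/

open Matrix Real
open scoped goldenRatio

section MinEig

variable {n : Type*} [Fintype n] [DecidableEq n] {M : Matrix n n ℝ}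

lemma bddBelow_realEigenvalues (M : Matrix n n ℝ) :
    BddBelow {t : ℝ | ∃ v : n → ℝ, v ≠ 0 ∧ M *ᵥ v = t • v} := by
  refine (Module.End.finite_hasEigenvalue (Matrix.toLin' M)).subset ?_ |>.bddBelow
  rintro t ⟨v, hv, hMv⟩
  exact Module.End.hasEigenvalue_of_hasEigenvector ⟨Module.End.mem_eigenspace_iff.mpr hMv, hv⟩

lemma posSemidef_sub_smul_one_of_le_minEig (hM : M.IsHermitian) {c : ℝ} (hc : c ≤ minEig M) :
    (M - c • (1 : Matrix n n ℝ)).PosSemidef := by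
  have hM' : (M - c • (1 : Matrix n n ℝ)).IsHermitian :=
    hM.sub (isHermitian_one.smul (IsSelfAdjoint.all c))
  refine hM'.posSemidef_iff_eigenvalues_nonneg.mpr fun i => ?_
  set v := (hM'.eigenvectorBasis i).ofLp
  have hv : v ≠ 0 := fun h0 => hM'.eigenvectorBasis.orthonormal.ne_zero i (by ext j; simp [v, h0])
  have hMv : M *ᵥ v = (hM'.eigenvalues i + c) • v := by
    have := hM'.mulVec_eigenvectorBasis i
    rw [sub_mulVec, smul_mulVec, one_mulVec, sub_eq_iff_eq_add] at this
    rw [add_smul, ← this]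
  have hle : minEig M ≤ hM'.eigenvalues i + c :=
    csInf_le (bddBelow_realEigenvalues M) ⟨v, hv, hMv⟩
  simp only [Pi.zero_apply]
  linarith

lemma le_dotProduct_mulVec_of_le_minEig (hM : M.IsHermitian) {c : ℝ} (hc : c ≤ minEig M)
    (v : n → ℝ) : c * (v ⬝ᵥ v) ≤ v ⬝ᵥ M *ᵥ v := by
  have := (posSemidef_sub_smul_one_of_le_minEig hM hc).dotProduct_mulVec_nonneg v
  simp only [star_trivial, sub_mulVec, smul_mulVec, one_mulVec, dotProduct_sub, dotProduct_smul,
    smul_eq_mul] at this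
  linarith

lemma mulVec_eq_smul_of_dotProduct_mulVec_eq (hM : M.IsHermitian) {c : ℝ} (hc : c ≤ minEig M)
    {v : n → ℝ} (hv : v ⬝ᵥ M *ᵥ v = c * (v ⬝ᵥ v)) : M *ᵥ v = c • v := by
  have := (posSemidef_sub_smul_one_of_le_minEig hM hc).dotProduct_mulVec_zero_iff v
  simpa only [star_trivial, sub_mulVec, smul_mulVec, one_mulVec, dotProduct_sub, dotProduct_smul,
    smul_eq_mul, hv, sub_self, sub_eq_zero, true_iff] using this

lemma minEig_le_apply_self (hM : M.IsHermitian) (i : n) : minEig M ≤ M i i := by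
  simpa using le_dotProduct_mulVec_of_le_minEig hM le_rfl (Pi.single i 1)

lemma single_add_single_dotProduct_mulVec (hM : M.IsHermitian) (x y : n) (p q : ℝ) :
    (Pi.single x p + Pi.single y q) ⬝ᵥ M *ᵥ (Pi.single x p + Pi.single y q) =
      p ^ 2 * M x x + 2 * p * q * M x y + q ^ 2 * M y y := by
  have hyx : M y x = M x y := by simpa using hM.apply x y
  simp [mulVec_add, dotProduct_add, add_dotProduct, hyx]
  ring

lemma single_add_single_dotProduct_self {x y : n} (hxy : x ≠ y) (p q : ℝ) :
    (Pi.single x p + Pi.single y q) ⬝ᵥ (Pi.single x p + Pi.single y q) = p ^ 2 + q ^ 2 := by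
  simp [dotProduct_add, hxy, hxy.symm]
  ring

lemma abs_apply_lt_one_of_apply_self_eq_neg_two (hM : M.IsHermitian) (h3 : -3 < minEig M)
    {x y : n} (hxy : x ≠ y) (hx : M x x = -2) (hy : M y y = -2) : |M x y| < 1 := by
  have hpair (e : ℝ) (he : e ^ 2 = 1) : -1 < e * M x y := by
    have := le_dotProduct_mulVec_of_le_minEig hM le_rfl (Pi.single x 1 + Pi.single y e)
    rw [single_add_single_dotProduct_mulVec hM, single_add_single_dotProduct_self hxy, hx, hy, he]
      at this
    linarith
  rw [abs_lt]
  constructor <;> linarith [hpair 1 (one_pow 2), hpair (-1) (by norm_num)]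

/-- With `ε = M x y`, the vector `ε eₓ + ψ e_y` attains the bound `-1 - φ` on the Rayleigh
quotient (because `ψ² = ψ + 1`), hence is an eigenvector. -/
lemma mulVec_eq_smul_of_apply_self_eq_neg_two_neg_one (hM : M.IsHermitian)
    (hφ : -1 - φ ≤ minEig M) {x y : n} (hxy : x ≠ y) (hx : M x x = -2) (hy : M y y = -1)
    (hε : M x y ^ 2 = 1) :
    M *ᵥ (Pi.single x (M x y) + Pi.single y ψ) =
      (-1 - φ) • (Pi.single x (M x y) + Pi.single y ψ) := by
  refine mulVec_eq_smul_of_dotProduct_mulVec_eq hM hφ ?_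
  rw [single_add_single_dotProduct_mulVec hM, single_add_single_dotProduct_self hxy, hx, hy, hε]
  linear_combination 2 * ψ * hε - ψ * goldenConj_sq

end MinEig

lemma Irrational.intCast_eq_zero_of_add_mul_eq_zero {r : ℝ} (hr : Irrational r) {a b : ℤ}
    (h : (a : ℝ) + b * r = 0) : a = 0 ∧ b = 0 := by
  obtain rfl : b = 0 := by
    by_contra hb
    exact (hr.mul_intCast hb).ne_int (-a) (by push_cast; linarith)
  simpa using h

namespace HoffmanGraph

variable {V : Type*} (H : HoffmanGraph V)

lemma commonFat_self (x : V) : H.commonFat x x = H.fatNbrs x := by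
  ext f
  simp [commonFat, fatNbrs]

lemma commonFat_subset_fatNbrs_right (x y : V) : H.commonFat x y ⊆ H.fatNbrs y :=
  fun _ hf => ⟨hf.1, hf.2.2⟩

lemma B_apply_of_adj {u w : H.Slim} (h : H.adj u w) : H.B u w = 1 - (H.commonFat u w).ncard := by
  simp [B, h]

lemma B_apply_of_not_adj {u w : H.Slim} (h : ¬ H.adj u w) :
    H.B u w = -(H.commonFat u w).ncard := by
  simp [B, h]

lemma B_apply_self (u : H.Slim) : H.B u u = -(H.fatNbrs u).ncard := by
  rw [B_apply_of_not_adj H (H.loopless u), commonFat_self]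

lemma exists_B_apply_eq_intCast (u w : H.Slim) : ∃ k : ℤ, H.B u w = k := by
  by_cases h : H.adj u w
  · exact ⟨1 - (H.commonFat u w).ncard, by simp [B_apply_of_adj H h]⟩
  · exact ⟨-(H.commonFat u w).ncard, by simp [B_apply_of_not_adj H h]⟩

lemma isHermitian_B : H.B.IsHermitian := by
  ext u w
  by_cases h : H.adj u w
  · simp [B_apply_of_adj H h, B_apply_of_adj H (H.symm h), H.commonFat_comm]
  · have h' : ¬ H.adj w u := fun h' => h (H.symm h')
    simp [B_apply_of_not_adj H h, B_apply_of_not_adj H h', H.commonFat_comm]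

/-- Condition (iv) of a decomposition, for two slim vertices in different parts. -/
def Compatible (x y : V) : Prop :=
  (H.commonFat x y).ncard ≤ 1 ∧ ((H.commonFat x y).ncard = 1 ↔ H.adj x y)

variable {H}

lemma Compatible.symm {x y : V} (h : H.Compatible x y) : H.Compatible y x := by
  rw [Compatible, H.commonFat_comm]
  exact ⟨h.1, h.2.trans ⟨H.symm, H.symm⟩⟩

lemma compatible_of_B_apply_eq_zero {u w : H.Slim} (h : H.B u w = 0) : H.Compatible u w := by
  by_cases ha : H.adj u w
  · rw [B_apply_of_adj H ha, sub_eq_zero] at h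
    have hc : (H.commonFat u w).ncard = 1 := by exact_mod_cast h.symm
    exact ⟨hc.le, iff_of_true hc ha⟩
  · rw [B_apply_of_not_adj H ha, neg_eq_zero] at h
    have hc : (H.commonFat u w).ncard = 0 := by exact_mod_cast h
    exact ⟨by omega, iff_of_false (by omega) ha⟩

lemma special_adj_of_not_compatible [Finite V] {u w : H.Slim} (huw : u ≠ w)
    (hc : (H.commonFat u w).ncard ≤ 1) (h : ¬ H.Compatible u w) :
    (H.special.pos u w ∧ H.B u w = 1) ∨ (H.special.neg u w ∧ H.B u w = -1) := by
  have hfin : (H.commonFat u w).Finite := Set.toFinite _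
  by_cases ha : H.adj u w
  · have hc0 : (H.commonFat u w).ncard = 0 := by
      by_contra hc0
      exact h ⟨hc, iff_of_true (by omega) ha⟩
    refine Or.inl ⟨⟨ha, (Set.ncard_eq_zero hfin).mp hc0⟩, ?_⟩
    rw [B_apply_of_adj H ha, hc0]
    norm_num
  · have hc1 : (H.commonFat u w).ncard = 1 := by
      by_contra hc1
      exact h ⟨hc, iff_of_false hc1 ha⟩
    refine Or.inr ⟨⟨huw, ha, (Set.ncard_pos hfin).mp (by omega)⟩, ?_⟩
    rw [B_apply_of_not_adj H ha, hc1]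
    norm_num

section Decomposition

variable [Fintype V] {ι : Type*}

variable (H) in
noncomputable def colorParts (c : V → ι) (i : ι) : Finset V := by
  classical
  exact {v | (¬ H.fat v ∧ c v = i) ∨ (H.fat v ∧ ∃ s, ¬ H.fat s ∧ c s = i ∧ H.adj v s)}

lemma mem_colorParts {c : V → ι} {i : ι} {v : V} :
    v ∈ H.colorParts c i ↔
      (¬ H.fat v ∧ c v = i) ∨ (H.fat v ∧ ∃ s, ¬ H.fat s ∧ c s = i ∧ H.adj v s) := by
  simp [colorParts]

lemma isDecomposition_colorParts {c : V → ι} (hc : ∀ i, ∃ s, ¬ H.fat s ∧ c s = i)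
    (hcross : ∀ x y, ¬ H.fat x → ¬ H.fat y → c x ≠ c y → H.Compatible x y) :
    H.IsDecomposition (H.colorParts c) where
  nonempty i := by
    obtain ⟨s, hs, hsi⟩ := hc i
    exact ⟨s, mem_colorParts.mpr (Or.inl ⟨hs, hsi⟩)⟩
  cover v := by
    by_cases hv : H.fat v
    · obtain ⟨s, hvs, hs⟩ := H.fat_slim v hv
      exact ⟨c s, mem_colorParts.mpr (Or.inr ⟨hv, s, hs, rfl, hvs⟩)⟩
    · exact ⟨c v, mem_colorParts.mpr (Or.inl ⟨hv, rfl⟩)⟩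
  slim_disj i j hij x hx hxi hxj := by
    simp only [mem_colorParts, hx, false_and, or_false, not_false_eq_true, true_and] at hxi hxj
    exact hij (hxi.symm.trans hxj)
  fat_closed i x y hxi hx hy hxy := by
    simp only [mem_colorParts, hx, false_and, or_false, not_false_eq_true, true_and] at hxi
    exact mem_colorParts.mpr (Or.inr ⟨hy, x, hx, hxi, H.symm hxy⟩)
  part_fat i y hyi hy := by
    simp only [mem_colorParts, hy, not_true_eq_false, false_and, true_and, false_or] at hyi
    obtain ⟨s, hs, hsi, hys⟩ := hyi
    exact ⟨s, mem_colorParts.mpr (Or.inl ⟨hs, hsi⟩), hs, hys⟩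
  cross i j hij x y hxi hyj hx hy := by
    simp only [mem_colorParts, hx, hy, false_and, or_false, not_false_eq_true, true_and]
      at hxi hyj
    exact hcross x y hx hy (by rw [hxi, hyj]; exact hij)

lemma exists_not_compatible_of_not_decomposable (hind : ¬ H.Decomposable) (P : Set V)
    (hP : ∃ x ∈ P, ¬ H.fat x) (hP' : ∃ y ∉ P, ¬ H.fat y) :
    ∃ u w : H.Slim, u.1 ∈ P ∧ w.1 ∉ P ∧ ¬ H.Compatible u w := by
  classical
  by_contra! hcomp
  let c : V → Fin 2 := fun v => if v ∈ P then 0 else 1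
  refine hind ⟨2, le_rfl, H.colorParts c, isDecomposition_colorParts ?_ ?_⟩
  · intro i
    fin_cases i
    · obtain ⟨x, hxP, hx⟩ := hP
      exact ⟨x, hx, if_pos hxP⟩
    · obtain ⟨y, hyP, hy⟩ := hP'
      exact ⟨y, hy, if_neg hyP⟩
  · intro x y hx hy hxy
    by_cases hxP : x ∈ P <;> by_cases hyP : y ∈ P
    · simp [c, hxP, hyP] at hxy
    · exact hcomp ⟨x, hx⟩ ⟨y, hy⟩ hxP hyP
    · exact (hcomp ⟨y, hy⟩ ⟨x, hx⟩ hyP hxP).symm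
    · simp [c, hxP, hyP] at hxy

end Decomposition

section Spectral

variable [Finite V]

lemma fatNbrs_ncard_le_two (h : -3 < H.lamMin) (u : H.Slim) : (H.fatNbrs u).ncard ≤ 2 := by
  classical
  have hu := h.trans_le (minEig_le_apply_self H.isHermitian_B u)
  rw [B_apply_self] at hu
  have : ((H.fatNbrs u).ncard : ℝ) < 3 := by linarith
  exact Nat.lt_succ_iff.mp (by exact_mod_cast this)

lemma B_apply_eq_zero_of_fatNbrs_ncard_eq_two (h : -3 < H.lamMin) {u w : H.Slim} (huw : u ≠ w)
    (hu : (H.fatNbrs u).ncard = 2) (hw : (H.fatNbrs w).ncard = 2) : H.B u w = 0 := by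
  classical
  have hlt := abs_apply_lt_one_of_apply_self_eq_neg_two H.isHermitian_B h huw
    (by simp [B_apply_self, hu]) (by simp [B_apply_self, hw])
  obtain ⟨k, hk⟩ := H.exists_B_apply_eq_intCast u w
  rw [hk] at hlt ⊢
  have : |k| < 1 := by exact_mod_cast hlt
  simp [Int.abs_lt_one_iff.mp this]

lemma fatNbrs_ncard_eq_one_of_not_compatible (hfat : H.IsFat) (h : -3 < H.lamMin)
    {x y : H.Slim} (hxy : x ≠ y) (hx : (H.fatNbrs x).ncard = 2) (hc : ¬ H.Compatible x y) :
    (H.fatNbrs y).ncard = 1 := by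
  have hpos : 0 < (H.fatNbrs y).ncard := by
    obtain ⟨f, hf⟩ := hfat y y.2
    exact (Set.ncard_pos (Set.toFinite _)).mpr ⟨f, hf⟩
  have hne : (H.fatNbrs y).ncard ≠ 2 := fun hy =>
    hc (compatible_of_B_apply_eq_zero (B_apply_eq_zero_of_fatNbrs_ncard_eq_two h hxy hx hy))
  have := fatNbrs_ncard_le_two h y
  omega

/-- The row of `z` in the eigenvector equation reads `B z x · ε + B z y · ψ = 0` with integer
coefficients, and `ψ` is irrational. -/
lemma B_apply_eq_zero_of_ne_of_ne (h : -1 - φ ≤ H.lamMin) {x y z : H.Slim} (hxy : x ≠ y)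
    (hzx : z ≠ x) (hzy : z ≠ y) (hx : (H.fatNbrs x).ncard = 2) (hy : (H.fatNbrs y).ncard = 1)
    (hε : H.B x y ^ 2 = 1) : H.B z x = 0 ∧ H.B z y = 0 := by
  classical
  have hrow := congrFun (mulVec_eq_smul_of_apply_self_eq_neg_two_neg_one H.isHermitian_B h hxy
    (by simp [B_apply_self, hx]) (by simp [B_apply_self, hy]) hε) z
  simp only [mulVec_add, mulVec_single, op_smul_eq_smul, Pi.add_apply, Pi.smul_apply, col_apply,
    smul_eq_mul, Pi.single_eq_of_ne hzx, Pi.single_eq_of_ne hzy, add_zero, mul_zero] at hrow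
  obtain ⟨a, ha⟩ := H.exists_B_apply_eq_intCast z x
  obtain ⟨b, hb⟩ := H.exists_B_apply_eq_intCast z y
  obtain ⟨e, he⟩ := H.exists_B_apply_eq_intCast x y
  rw [ha, hb, he] at hrow
  rw [he] at hε
  obtain ⟨hae, rfl⟩ := goldenConj_irrational.intCast_eq_zero_of_add_mul_eq_zero (a := a * e)
    (b := b) (by push_cast; linarith)
  have he0 : e ≠ 0 := by rintro rfl; simp at hε
  simp [ha, hb, (mul_eq_zero.mp hae).resolve_right he0]

end Spectral

variable [Fintype V]

lemma eq_or_eq_of_not_decomposable (hind : ¬ H.Decomposable) (h : -1 - φ ≤ H.lamMin)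
    {x y : H.Slim} (hxy : x ≠ y) (hx : (H.fatNbrs x).ncard = 2) (hy : (H.fatNbrs y).ncard = 1)
    (hε : H.B x y ^ 2 = 1) (z : H.Slim) : z = x ∨ z = y := by
  by_contra! hz
  obtain ⟨u, w, hu, hw, huw⟩ := exists_not_compatible_of_not_decomposable hind {x.1, y.1}
    ⟨x, by simp, x.2⟩ ⟨z, by simp [← Subtype.ext_iff, hz.1, hz.2], z.2⟩
  have hwx : w ≠ x := by rintro rfl; simp at hw
  have hwy : w ≠ y := by rintro rfl; simp at hw
  have hw0 := B_apply_eq_zero_of_ne_of_ne h hxy hwx hwy hx hy hε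
  rcases hu with hu | hu <;> obtain rfl := Subtype.ext hu
  · exact huw (compatible_of_B_apply_eq_zero hw0.1).symm
  · exact huw (compatible_of_B_apply_eq_zero hw0.2).symm

end HoffmanGraph

namespace EdgeSignedGraph

variable {α β : Type*} {S : EdgeSignedGraph α} {T : EdgeSignedGraph β}

lemma pos_comm {x y : α} : S.pos x y ↔ S.pos y x := ⟨S.pos_symm, S.pos_symm⟩

lemma neg_comm {x y : α} : S.neg x y ↔ S.neg y x := ⟨S.neg_symm, S.neg_symm⟩

lemma nonempty_iso_of_forall_eq_or_eq {x y : α} {a b : β} (hxy : x ≠ y) (hab : a ≠ b)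
    (hα : ∀ z, z = x ∨ z = y) (hβ : ∀ w, w = a ∨ w = b)
    (hpos : S.pos x y ↔ T.pos a b) (hneg : S.neg x y ↔ T.neg a b) :
    Nonempty (EdgeSignedIso S T) := by
  classical
  let f : α → β := fun z => if z = x then a else b
  have hfx : f x = a := if_pos rfl
  have hfy : f y = b := if_neg hxy.symm
  have hf : f.Bijective := by
    refine ⟨fun u v huv => ?_, fun w => ?_⟩
    · rcases hα u with rfl | rfl <;> rcases hα v with rfl | rfl <;>
        simp_all [hab.symm]
    · rcases hβ w with rfl | rfl
      exacts [⟨x, hfx⟩, ⟨y, hfy⟩]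
  refine ⟨⟨Equiv.ofBijective f hf, fun u v => ?_, fun u v => ?_⟩⟩ <;>
    rcases hα u with rfl | rfl <;> rcases hα v with rfl | rfl <;>
    simp only [Equiv.ofBijective_apply, hfx, hfy]
  · exact iff_of_false (S.pos_irrefl _) (T.pos_irrefl _)
  · exact hpos
  · rw [pos_comm, hpos, pos_comm]
  · exact iff_of_false (S.pos_irrefl _) (T.pos_irrefl _)
  · exact iff_of_false (S.neg_irrefl _) (T.neg_irrefl _)
  · exact hneg
  · rw [neg_comm, hneg, neg_comm]
  · exact iff_of_false (S.neg_irrefl _) (T.neg_irrefl _)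

lemma nonempty_iso_of_forall_eq {x : α} {a : β} (hα : ∀ z, z = x) (hβ : ∀ w, w = a) :
    Nonempty (EdgeSignedIso S T) := by
  refine ⟨⟨⟨fun _ => a, fun _ => x, fun z => (hα z).symm, fun w => (hβ w).symm⟩,
    fun u v => ?_, fun u v => ?_⟩⟩ <;> rw [hα u, hα v]
  exacts [iff_of_false (S.pos_irrefl _) (T.pos_irrefl _),
    iff_of_false (S.neg_irrefl _) (T.neg_irrefl _)]

end EdgeSignedGraph

lemma Q_one_zero_one_pos : (Q 1 0 1).pos (.inl 0) (.inr (.inr 0)) :=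
  Or.inl ⟨0, 0, rfl, rfl, rfl⟩

lemma Q_one_zero_one_not_neg (a b : Fin 1 ⊕ Fin 0 ⊕ Fin 1) : ¬ (Q 1 0 1).neg a b := by
  rintro (⟨j, -⟩ | ⟨j, -⟩) <;> exact j.elim0

lemma Q_zero_one_one_neg : (Q 0 1 1).neg (.inr (.inl 0)) (.inr (.inr 0)) :=
  Or.inl ⟨0, 0, rfl, rfl, rfl⟩

lemma Q_zero_one_one_not_pos : ¬ (Q 0 1 1).pos (.inr (.inl 0)) (.inr (.inr 0)) := by
  rintro (⟨i, -⟩ | ⟨i, -⟩ | ⟨k, l, -, -, hkl⟩)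
  exacts [i.elim0, i.elim0, hkl (Subsingleton.elim k l)]

open EdgeSignedGraph in
lemma HoffmanGraph.nonempty_iso_of_special_adj {V : Type*} {H : HoffmanGraph V} {x y : H.Slim}
    (hxy : x ≠ y) (hall : ∀ z, z = x ∨ z = y) (h : H.special.pos x y ∨ H.special.neg x y) :
    Nonempty (EdgeSignedIso H.special (Q 1 0 1)) ∨
      Nonempty (EdgeSignedIso H.special (Q 0 1 1)) := by
  rcases h with hpos | hneg
  · exact Or.inl (nonempty_iso_of_forall_eq_or_eq hxy (by decide) hall (by decide)
      (iff_of_true hpos Q_one_zero_one_pos)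
      (iff_of_false (H.special.pos_neg _ _ hpos) (Q_one_zero_one_not_neg _ _)))
  · exact Or.inr (nonempty_iso_of_forall_eq_or_eq hxy (by decide) hall (by decide)
      (iff_of_false (fun hpos => H.special.pos_neg _ _ hpos hneg) Q_zero_one_one_not_pos)
      (iff_of_true hneg Q_zero_one_one_neg))

open HoffmanGraph EdgeSignedGraph

/-- Lemma 4.4. Let `H` be a fat indecomposable Hoffman graph with
`λ_min(H) ≥ −1−τ`. If some slim vertex has at least two fat neighbors, then `H` has
at most two slim vertices; that is, `S(H)` is isomorphic to `Q_{0,0,1}`, `Q_{1,0,1}`,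
or `Q_{0,1,1}`. -/
theorem statement13 {V : Type*} [Fintype V] (H : HoffmanGraph V)
    (hfat : H.IsFat) (hind : ¬ H.Decomposable)
    (h : H.lamMin ≥ -1 - (1 + Real.sqrt 5) / 2)
    (hx : ∃ x : V, ¬ H.fat x ∧ 2 ≤ (H.fatNbrs x).ncard) :
    Fintype.card H.Slim ≤ 2 ∧
      (Nonempty (EdgeSignedIso H.special (Q 0 0 1)) ∨
       Nonempty (EdgeSignedIso H.special (Q 1 0 1)) ∨
       Nonempty (EdgeSignedIso H.special (Q 0 1 1))) := by
  obtain ⟨x₀, hx₀, hx₀2⟩ := hx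
  set x : H.Slim := ⟨x₀, hx₀⟩
  have hφ : -1 - φ ≤ H.lamMin := h
  have h3 : -3 < H.lamMin := by linarith [goldenRatio_lt_two]
  have hx : (H.fatNbrs x).ncard = 2 := (fatNbrs_ncard_le_two h3 x).antisymm hx₀2
  suffices hiso : Nonempty (EdgeSignedIso H.special (Q 0 0 1)) ∨
      Nonempty (EdgeSignedIso H.special (Q 1 0 1)) ∨
      Nonempty (EdgeSignedIso H.special (Q 0 1 1)) by
    refine ⟨?_, hiso⟩
    rcases hiso with ⟨⟨e⟩⟩ | ⟨⟨e⟩⟩ | ⟨⟨e⟩⟩ <;>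
      exact (Fintype.card_congr e.toEquiv).le.trans (by simp)
  by_cases hone : ∀ z, z = x
  · exact Or.inl (nonempty_iso_of_forall_eq (a := .inr (.inr 0)) hone (by decide))
  obtain ⟨z, hz⟩ := not_forall.mp hone
  obtain ⟨u, y, hu, hy, hxy⟩ := exists_not_compatible_of_not_decomposable hind {x₀}
    ⟨x₀, rfl, hx₀⟩ ⟨z, fun hz' => hz (Subtype.ext hz'), z.2⟩
  obtain rfl : u = x := Subtype.ext hu
  have hyx : x ≠ y := fun h' => hy (h' ▸ rfl)
  have hy1 := fatNbrs_ncard_eq_one_of_not_compatible hfat h3 hyx hx hxy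
  have hc : (H.commonFat x y).ncard ≤ 1 :=
    hy1 ▸ Set.ncard_le_ncard (H.commonFat_subset_fatNbrs_right x y) (Set.toFinite _)
  have hadj := special_adj_of_not_compatible hyx hc hxy
  have hall := eq_or_eq_of_not_decomposable hind hφ hyx hx hy1
    (by rcases hadj with ⟨-, hB⟩ | ⟨-, hB⟩ <;> simp [hB])
  exact Or.inr (nonempty_iso_of_special_adj hyx hall (hadj.imp And.left And.left))
end

section
/- Let 𝔥 be a Hoffman graph in which every slim vertex has exactly one fat neighbor, and suppose its special graph S(𝔥) is isomorphic to Q_{p,q,r} for some nonnegative integers p, q, r with p + q ≤ r and r ≥ 2. Then 𝔥 is (−1−τ)-reducible, where τ = (1+√5)/2. -/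
/-
Attach to `𝔥` one new fat vertex adjacent to the slim vertices of `V_r`, obtaining `𝔥'`. Since
every slim vertex has exactly one fat neighbour, `B(𝔥) = M(S(𝔥)) - I`, and
`B(𝔥') = B(𝔥) - χχᵀ` with `χ` the indicator of `V_r`. In the coordinates of `Q_{p,q,r}` the
matrix `B(𝔥')` is block diagonal along the matched pairs, with blocks `[-2]` and
`[[-1, ±1], [±1, -2]]`, whose smallest eigenvalue is `-1 - τ`. Hence the pair containing the
first vertex of `V_r` and the remaining slim vertices split `𝔥'` into a decomposition
`{𝔥¹, 𝔥²}`: both parts have principal submatrices of `B(𝔥')` as `B`-matrices, and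
`λ_min(𝔥) ≥ λ_min(𝔥')` because `B(𝔥) = B(𝔥') + χχᵀ`.
-/

open Matrix Real

theorem le_minEig_of_posSemidef {n : Type*} [Fintype n] [DecidableEq n] {M : Matrix n n ℝ}
    {α : ℝ} (hα : α ≤ 0) (hM : (M - α • 1).PosSemidef) : α ≤ minEig M := by
  rcases {t : ℝ | ∃ v : n → ℝ, v ≠ 0 ∧ M *ᵥ v = t • v}.eq_empty_or_nonempty with h | h
  · -- only for an empty index type, where `minEig M = sInf ∅ = 0`
    rwa [minEig, h, Real.sInf_empty]
  refine le_csInf h ?_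
  rintro t ⟨v, hv, hMv⟩
  have hquad := hM.dotProduct_mulVec_nonneg v
  rw [star_trivial, sub_mulVec, hMv, smul_mulVec, one_mulVec, dotProduct_sub, dotProduct_smul,
    dotProduct_smul, smul_eq_mul, smul_eq_mul, ← sub_mul] at hquad
  have hvv : 0 < v ⬝ᵥ v := by simpa using dotProduct_self_star_pos_iff.2 hv
  nlinarith

open Classical in
lemma Set.ncard_option {α : Type*} {S : Set (Option α)} (hS : S.Finite) :
    S.ncard = (some ⁻¹' S).ncard + if none ∈ S then 1 else 0 := by
  have hsome : some '' (some ⁻¹' S) = S \ {none} := by ext (_ | a) <;> simp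
  rw [← Set.ncard_image_of_injective _ (Option.some_injective α), hsome]
  split_ifs with h
  · exact (Set.ncard_sdiff_singleton_add_one h hS).symm
  · rw [Set.sdiff_singleton_eq_self h, add_zero]

lemma Finset.sum_mul_sum_ite_eq_comp {α β R : Type*} [Fintype α] [Fintype β] [DecidableEq β]
    [CommSemiring R] (f : α → β) (c : β → R) (a : α → R) :
    ∑ k, c k * ∑ i, (if k = f i then a i else 0) = ∑ i, a i * c (f i) := by
  simp_rw [Finset.mul_sum, mul_ite, mul_zero]
  rw [Finset.sum_comm]
  simp [mul_comm]

lemma sum_sq_comp_le_of_injective {α γ : Type*} [Fintype α] [Fintype γ] {f : α → γ}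
    (hf : Function.Injective f) (c : γ → ℝ) : ∑ i, c (f i) ^ 2 ≤ ∑ k, c k ^ 2 := by
  classical
  calc ∑ i, c (f i) ^ 2 = ∑ k ∈ Finset.univ.image f, c k ^ 2 :=
        (Finset.sum_image (f := fun k => c k ^ 2) fun i _ j _ h => hf h).symm
    _ ≤ ∑ k, c k ^ 2 := Finset.sum_le_univ_sum_of_nonneg fun k => sq_nonneg (c k)

lemma goldenRatio_quadratic_nonneg {α γ : Type*} [Fintype α] [Fintype γ] {f : α → γ}
    (hf : Function.Injective f) (a : α → ℝ) (c : γ → ℝ) :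
    0 ≤ goldenRatio * ∑ i, a i ^ 2 + (goldenRatio - 1) * ∑ k, c k ^ 2
      + 2 * ∑ i, a i * c (f i) := by
  have hsq : ∀ i, (goldenRatio - 1) * (c (f i) + goldenRatio * a i) ^ 2
      = goldenRatio * a i ^ 2 + (goldenRatio - 1) * c (f i) ^ 2 + 2 * (a i * c (f i)) := by
    intro i
    linear_combination (a i ^ 2 * goldenRatio + 2 * a i * c (f i)) * goldenRatio_sq
  have hsum : 0 ≤ goldenRatio * ∑ i, a i ^ 2 + (goldenRatio - 1) * ∑ i, c (f i) ^ 2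
      + 2 * ∑ i, a i * c (f i) := by
    simp only [Finset.mul_sum, ← Finset.sum_add_distrib, ← hsq]
    exact Finset.sum_nonneg fun i _ =>
      mul_nonneg (sub_nonneg.2 one_lt_goldenRatio.le) (sq_nonneg _)
  nlinarith [sum_sq_comp_le_of_injective hf c, one_lt_goldenRatio]

lemma EdgeSignedGraph.isHermitian_M {V : Type*} (S : EdgeSignedGraph V) : S.M.IsHermitian := by
  ext x y
  have hpos : S.pos y x ↔ S.pos x y := ⟨S.pos_symm, S.pos_symm⟩
  have hneg : S.neg y x ↔ S.neg x y := ⟨S.neg_symm, S.neg_symm⟩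
  simp only [EdgeSignedGraph.M, conjTranspose_apply, of_apply, star_trivial]
  split_ifs <;> simp_all

lemma EdgeSignedIso.M_eq_submatrix {V W : Type*} {S : EdgeSignedGraph V} {T : EdgeSignedGraph W}
    (φ : EdgeSignedIso S T) : S.M = T.M.submatrix φ.toEquiv φ.toEquiv := by
  ext x y
  simp only [EdgeSignedGraph.M, submatrix_apply, of_apply]
  split_ifs <;> simp_all [φ.pos_iff, φ.neg_iff]

namespace HoffmanGraph

variable {V : Type*} (H : HoffmanGraph V)

open Classical in
lemma B_apply (x y : H.Slim) :
    H.B x y = (if H.adj x.1 y.1 then 1 else 0) - (H.commonFat x.1 y.1).ncard := rfl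

lemma B_eq_M_special_sub_one [Finite V] [DecidableEq H.Slim]
    (h1 : ∀ x : V, ¬ H.fat x → (H.fatNbrs x).ncard = 1) : H.B = H.special.M - 1 := by
  ext s t
  have hle : (H.commonFat s.1 t.1).ncard ≤ 1 :=
    (Set.ncard_le_ncard (t := H.fatNbrs s.1) fun f hf => ⟨hf.1, hf.2.1⟩).trans (h1 s.1 s.2).le
  by_cases hst : s = t
  · subst hst
    have hself : H.commonFat s.1 s.1 = H.fatNbrs s.1 := by
      ext f; simp [commonFat, fatNbrs]
    simp [B_apply, EdgeSignedGraph.M, special, H.loopless, hself, h1 s.1 s.2]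
  rcases (H.commonFat s.1 t.1).eq_empty_or_nonempty with hcf | hcf
  · by_cases hadj : H.adj s.1 t.1 <;>
      simp [B_apply, EdgeSignedGraph.M, special, hst, hcf, hadj]
  · have hone : (H.commonFat s.1 t.1).ncard = 1 :=
      le_antisymm hle ((Set.ncard_pos (Set.toFinite _)).2 hcf)
    by_cases hadj : H.adj s.1 t.1 <;>
      simp [B_apply, EdgeSignedGraph.M, special, hst, hcf, hcf.ne_empty, hone, hadj]

lemma B_eq_submatrix_of_specialIso [Finite V] {U : Type*} [DecidableEq U]
    {T : EdgeSignedGraph U} (h1 : ∀ x : V, ¬ H.fat x → (H.fatNbrs x).ncard = 1)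
    (φ : EdgeSignedIso H.special T) : H.B = (T.M - 1).submatrix φ.toEquiv φ.toEquiv := by
  classical
  ext s t
  simp [H.B_eq_M_special_sub_one h1, φ.M_eq_submatrix, one_apply]

lemma le_lamMin_of_posSemidef [Finite V] [DecidableEq H.Slim] {α : ℝ} (hα : α ≤ 0)
    (hB : (H.B - α • 1).PosSemidef) : α ≤ H.lamMin :=
  le_minEig_of_posSemidef hα hB

def induceSlimVal (W : Finset V) (hW : ∀ y ∈ W, H.fat y → ∃ x ∈ W, ¬ H.fat x ∧ H.adj y x)
    (z : (H.induce W hW).Slim) : H.Slim :=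
  ⟨z.1.1, z.2⟩

lemma induceSlimVal_injective (W : Finset V)
    (hW : ∀ y ∈ W, H.fat y → ∃ x ∈ W, ¬ H.fat x ∧ H.adj y x) :
    Function.Injective (H.induceSlimVal W hW) :=
  fun _ _ h => Subtype.ext (Subtype.ext congr($h.1))

lemma B_induce {W : Finset V} (hW : ∀ y ∈ W, H.fat y → ∃ x ∈ W, ¬ H.fat x ∧ H.adj y x)
    (hclosed : ∀ x y : V, x ∈ W → ¬ H.fat x → H.fat y → H.adj x y → y ∈ W) :
    (H.induce W hW).B = H.B.submatrix (H.induceSlimVal W hW) (H.induceSlimVal W hW) := by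
  ext z₁ z₂
  have hcf : ((H.induce W hW).commonFat z₁.1 z₂.1).ncard = (H.commonFat z₁.1.1 z₂.1.1).ncard :=
    Set.ncard_preimage_of_injective_subset_range (s := H.commonFat z₁.1.1 z₂.1.1)
      Subtype.val_injective fun f hf => ⟨⟨f, hclosed _ _ z₁.1.2 z₁.2 hf.1 hf.2.1⟩, rfl⟩
  simp only [B_apply, submatrix_apply, hcf]
  rfl

variable {H} in
lemma IsDecomposition.le_lamMin_part [Finite V] [DecidableEq H.Slim] {ι : Type*}
    {W : ι → Finset V} (hD : H.IsDecomposition W) {α : ℝ} (hα : α ≤ 0)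
    (hB : (H.B - α • 1).PosSemidef) (i : ι) :
    α ≤ (H.induce (W i) (hD.part_fat i)).lamMin := by
  classical
  refine le_lamMin_of_posSemidef _ hα ?_
  rw [B_induce _ _ (hD.fat_closed i), ← submatrix_one _ (H.induceSlimVal_injective _ _)]
  exact hB.submatrix _

lemma commonFat_ncard_of_B_eq_zero {s t : H.Slim} (h : H.B s t = 0) :
    (H.commonFat s.1 t.1).ncard ≤ 1 ∧ ((H.commonFat s.1 t.1).ncard = 1 ↔ H.adj s.1 t.1) := by
  rw [B_apply, sub_eq_zero] at h
  split_ifs at h with hadj <;> norm_cast at h <;> simp [← h, hadj]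

section slimParts

variable [Fintype V] {ι : Type*}

open Classical in
noncomputable def slimParts (c : H.Slim → ι) (i : ι) : Finset V :=
  {v | (∃ h : ¬ H.fat v, c ⟨v, h⟩ = i) ∨ (H.fat v ∧ ∃ s : H.Slim, c s = i ∧ H.adj v s.1)}

variable {H}

lemma mem_slimParts {c : H.Slim → ι} {i : ι} {v : V} :
    v ∈ H.slimParts c i ↔
      (∃ h : ¬ H.fat v, c ⟨v, h⟩ = i) ∨ (H.fat v ∧ ∃ s : H.Slim, c s = i ∧ H.adj v s.1) := by
  simp [slimParts]

lemma val_mem_slimParts {c : H.Slim → ι} {s : H.Slim} : s.1 ∈ H.slimParts c (c s) :=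
  mem_slimParts.2 (.inl ⟨s.2, rfl⟩)

lemma isDecomposition_slimParts {c : H.Slim → ι} (hc : Function.Surjective c)
    (hB : ∀ s t, c s ≠ c t → H.B s t = 0) : H.IsDecomposition (H.slimParts c) where
  nonempty i := by
    obtain ⟨s, rfl⟩ := hc i
    exact ⟨s.1, val_mem_slimParts⟩
  cover v := by
    by_cases hv : H.fat v
    · obtain ⟨y, hvy, hy⟩ := H.fat_slim v hv
      exact ⟨c ⟨y, hy⟩, mem_slimParts.2 (.inr ⟨hv, _, rfl, hvy⟩)⟩
    · exact ⟨c ⟨v, hv⟩, val_mem_slimParts⟩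
  slim_disj i j hij x hx hi hj := by
    obtain ⟨_, rfl⟩ | ⟨hf, -⟩ := mem_slimParts.1 hi
    · obtain ⟨_, rfl⟩ | ⟨hf, -⟩ := mem_slimParts.1 hj
      · exact hij rfl
      · exact hx hf
    · exact hx hf
  fat_closed i x y hi hx hy hxy := by
    obtain ⟨_, rfl⟩ | ⟨hf, -⟩ := mem_slimParts.1 hi
    · exact mem_slimParts.2 (.inr ⟨hy, ⟨x, hx⟩, rfl, H.symm hxy⟩)
    · exact absurd hf hx
  part_fat i y hi hy := by
    obtain ⟨hf, -⟩ | ⟨-, s, rfl, hys⟩ := mem_slimParts.1 hi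
    · exact absurd hy hf
    · exact ⟨s.1, val_mem_slimParts, s.2, hys⟩
  cross i j hij x y hi hj hx hy := by
    obtain ⟨_, rfl⟩ | ⟨hf, -⟩ := mem_slimParts.1 hi
    · obtain ⟨_, rfl⟩ | ⟨hf, -⟩ := mem_slimParts.1 hj
      · exact H.commonFat_ncard_of_B_eq_zero (hB _ _ hij)
      · exact absurd hf hy
    · exact absurd hf hx

end slimParts

section addFat

variable {W : Type*} (e : V ≃ W) (X : Set H.Slim) (hX : X.Nonempty)

/-- `H` plus a new fat vertex `none` adjacent exactly to the slim vertices in `X`. The relabelling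
`e` only moves the vertices to another universe (`AlphaReducible` asks for a graph in `Type`). -/
def addFat : HoffmanGraph (Option W) where
  adj
    | some a, some b => H.adj (e.symm a) (e.symm b)
    | some a, none | none, some a => ∃ h : ¬ H.fat (e.symm a), ⟨e.symm a, h⟩ ∈ X
    | none, none => False
  symm := by
    rintro (_ | a) (_ | b) h
    exacts [h, h, h, H.symm h]
  loopless := by
    rintro (_ | a) h
    exacts [h, H.loopless _ h]
  fat
    | some a => H.fat (e.symm a)
    | none => True
  fat_slim := by
    rintro (_ | a) ha
    · obtain ⟨s, hs⟩ := hX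
      exact ⟨some (e s.1), ⟨by simpa using s.2, by simpa using hs⟩, by simpa using s.2⟩
    · obtain ⟨y, hay, hy⟩ := H.fat_slim _ ha
      exact ⟨some (e y), by simpa using hay, by simpa using hy⟩
  fat_nonadj := by
    rintro (_ | a) (_ | b) ha hb hab
    exacts [hab, hab.1 hb, hab.1 ha, H.fat_nonadj _ _ ha hb hab]

def addFatEmbedding : HoffmanEmbedding H (H.addFat e X hX) where
  toFun x := some (e x)
  inj _ _ h := e.injective (Option.some_injective _ h)
  adj_iff x y := by simp [addFat]
  fat_iff x := by simp [addFat]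

def addFatSlimEquiv : H.Slim ≃ (H.addFat e X hX).Slim where
  toFun s := ⟨some (e s.1), by simpa [addFat] using s.2⟩
  invFun
    | ⟨some a, h⟩ => ⟨e.symm a, h⟩
    | ⟨none, h⟩ => absurd trivial h
  left_inv s := by simp
  right_inv
    | ⟨some a, h⟩ => by simp
    | ⟨none, h⟩ => absurd trivial h

lemma B_addFat_submatrix [Finite V] :
    (H.addFat e X hX).B.submatrix (H.addFatSlimEquiv e X hX) (H.addFatSlimEquiv e X hX)
      = H.B - vecMulVec (X.indicator 1) (X.indicator 1) := by
  classical
  have : Finite W := .of_equiv V e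
  ext s t
  have hpre : some ⁻¹' (H.addFat e X hX).commonFat (some (e s.1)) (some (e t.1))
      = e.symm ⁻¹' H.commonFat s.1 t.1 := by
    ext; simp [commonFat, addFat]
  have hnone : none ∈ (H.addFat e X hX).commonFat (some (e s.1)) (some (e t.1))
      ↔ s ∈ X ∧ t ∈ X := by
    simp [commonFat, addFat, s.2, t.2]
  have hcf :=
    Set.ncard_option (((H.addFat e X hX).commonFat (some (e s.1)) (some (e t.1))).toFinite)
  rw [hpre, Set.ncard_preimage_of_injective_subset_range e.symm.injective (by simp)] at hcf
  have hadj : (H.addFat e X hX).adj (some (e s.1)) (some (e t.1)) ↔ H.adj s.1 t.1 := by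
    simp [addFat]
  simp only [B_apply, submatrix_apply, Matrix.sub_apply, vecMulVec_apply, Set.indicator_apply]
  change (if (H.addFat e X hX).adj (some (e s.1)) (some (e t.1)) then (1 : ℝ) else 0)
    - (((H.addFat e X hX).commonFat (some (e s.1)) (some (e t.1))).ncard : ℝ) = _
  rw [hcf]
  by_cases hs : s ∈ X <;> by_cases ht : t ∈ X <;> simp [hs, ht, hadj, hnone, sub_add_eq_sub_sub]

lemma addFatEmbedding_mem_slimParts [Fintype W] {ι : Type*} (c : (H.addFat e X hX).Slim → ι)
    (s : H.Slim) : (H.addFatEmbedding e X hX).toFun s.1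
      ∈ (H.addFat e X hX).slimParts c (c (H.addFatSlimEquiv e X hX s)) :=
  val_mem_slimParts

lemma posSemidef_B_sub_of_addFat [Finite V] [DecidableEq H.Slim]
    [DecidableEq (H.addFat e X hX).Slim] {α : ℝ}
    (h : ((H.addFat e X hX).B - α • 1).PosSemidef) : (H.B - α • 1).PosSemidef := by
  have hB : H.B = (H.addFat e X hX).B.submatrix (H.addFatSlimEquiv e X hX)
      (H.addFatSlimEquiv e X hX) + vecMulVec (X.indicator 1) (X.indicator 1) := by
    rw [B_addFat_submatrix, sub_add_cancel]
  rw [hB, add_sub_right_comm, ← submatrix_one_equiv (H.addFatSlimEquiv e X hX)]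
  have hχ := posSemidef_vecMulVec_self_star (X.indicator 1 : H.Slim → ℝ)
  rw [star_trivial] at hχ
  exact (h.submatrix _).add hχ

end addFat

end HoffmanGraph

namespace Q

open Sum

variable {p q r : ℕ}

/-- The perfect matchings `V_p → U_p` and `V_q → U_q`, together. -/
def matching (hpq : p + q ≤ r) : Fin p ⊕ Fin q → Fin r :=
  Sum.elim (fun i => ⟨i, by omega⟩) (fun j => ⟨p + j, by omega⟩)

lemma matching_injective (hpq : p + q ≤ r) : Function.Injective (matching hpq) := by
  rintro (i | j) (i' | j') h <;> simp [matching, Fin.ext_iff] at h ⊢ <;> omega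

def pairIndex (hpq : p + q ≤ r) : Fin p ⊕ Fin q ⊕ Fin r → Fin r
  | inl i => matching hpq (inl i)
  | inr (inl j) => matching hpq (inr j)
  | inr (inr k) => k

lemma val_eq_iff_eq_matching_inl (hpq : p + q ≤ r) {k : Fin r} {i : Fin p} :
    (k : ℕ) = i ↔ k = matching hpq (inl i) := by
  simp [matching, Fin.ext_iff]

lemma val_eq_iff_eq_matching_inr (hpq : p + q ≤ r) {k : Fin r} {j : Fin q} :
    (k : ℕ) = p + j ↔ k = matching hpq (inr j) := by
  simp [matching, Fin.ext_iff]

variable (p q r) in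
noncomputable def cliqueIndicator : Fin p ⊕ Fin q ⊕ Fin r → ℝ :=
  (Set.range (inr ∘ inr)).indicator 1

variable (p q r) in
/-- `B(𝔥')` in the coordinates of `Q_{p,q,r}`, where `𝔥'` is `𝔥` plus a fat vertex adjacent to
`V_r`: see `EdgeSignedIso.B_addFat_cliqueSet`. -/
noncomputable def reducedMatrix : Matrix (Fin p ⊕ Fin q ⊕ Fin r) (Fin p ⊕ Fin q ⊕ Fin r) ℝ :=
  (Q p q r).M - 1 - vecMulVec (cliqueIndicator p q r) (cliqueIndicator p q r)

@[simp] lemma cliqueIndicator_inl (i : Fin p) : cliqueIndicator p q r (inl i) = 0 := by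
  simp [cliqueIndicator]

@[simp] lemma cliqueIndicator_inr_inl (j : Fin q) : cliqueIndicator p q r (inr (inl j)) = 0 := by
  simp [cliqueIndicator]

@[simp] lemma cliqueIndicator_inr_inr (k : Fin r) : cliqueIndicator p q r (inr (inr k)) = 1 := by
  simp [cliqueIndicator]

lemma reducedMatrix_eq_zero_of_pairIndex_ne (hpq : p + q ≤ r) {a b : Fin p ⊕ Fin q ⊕ Fin r}
    (h : pairIndex hpq a ≠ pairIndex hpq b) : reducedMatrix p q r a b = 0 := by
  rcases a with i | j | k <;> rcases b with i' | j' | k' <;>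
    simp [reducedMatrix, Q, EdgeSignedGraph.M, pairIndex, one_apply, vecMulVec_apply,
      val_eq_iff_eq_matching_inl hpq, val_eq_iff_eq_matching_inr hpq,
      (matching_injective hpq).eq_iff] at h ⊢ <;> grind

def side (hpq : p + q ≤ r) (a : Fin p ⊕ Fin q ⊕ Fin r) : Fin 2 :=
  if (pairIndex hpq a : ℕ) = 0 then 0 else 1

lemma side_surjective (hpq : p + q ≤ r) (hr : 2 ≤ r) : Function.Surjective (side hpq) := by
  intro i
  fin_cases i
  · exact ⟨inr (inr ⟨0, by omega⟩), by simp [side, pairIndex]⟩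
  · exact ⟨inr (inr ⟨1, by omega⟩), by simp [side, pairIndex]⟩

lemma reducedMatrix_eq_zero_of_side_ne (hpq : p + q ≤ r) {a b : Fin p ⊕ Fin q ⊕ Fin r}
    (h : side hpq a ≠ side hpq b) : reducedMatrix p q r a b = 0 :=
  reducedMatrix_eq_zero_of_pairIndex_ne hpq fun hab => h (by simp only [side, hab])

lemma dotProduct_M_mulVec (hpq : p + q ≤ r) (v : Fin p ⊕ Fin q ⊕ Fin r → ℝ) :
    v ⬝ᵥ ((Q p q r).M *ᵥ v) = 2 * ∑ i, v (inl i) * v (inr (inr (matching hpq (inl i))))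
      - 2 * ∑ j, v (inr (inl j)) * v (inr (inr (matching hpq (inr j))))
      + (∑ k, v (inr (inr k))) ^ 2 - ∑ k, v (inr (inr k)) ^ 2 := by
  have hoff : ∀ k : Fin r, ∑ l, (if k = l then 0 else v (inr (inr l)))
      = ∑ l, v (inr (inr l)) - v (inr (inr k)) := by
    simp [Finset.sum_ite, Finset.filter_ne, Finset.sum_erase_eq_sub]
  simp only [Q, EdgeSignedGraph.M, mulVec, dotProduct, Fintype.sum_sum_type, of_apply]
  simp [val_eq_iff_eq_matching_inl hpq, val_eq_iff_eq_matching_inr hpq, mul_add,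
    Finset.sum_add_distrib, hoff, Finset.sum_mul_sum_ite_eq_comp, mul_sub,
    Finset.sum_sub_distrib, ← Finset.sum_mul, sq]
  ring

lemma posSemidef_reducedMatrix_sub (hpq : p + q ≤ r) :
    (reducedMatrix p q r - (-1 - goldenRatio) • 1).PosSemidef := by
  refine .of_dotProduct_mulVec_nonneg ?_ fun v => ?_
  · have hχ := (posSemidef_vecMulVec_self_star (cliqueIndicator p q r)).isHermitian
    rw [star_trivial] at hχ
    exact (((Q p q r).isHermitian_M.sub isHermitian_one).sub hχ).sub
      (isHermitian_one.smul (IsSelfAdjoint.all _))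
  have hquad := goldenRatio_quadratic_nonneg (matching_injective hpq)
    (Sum.elim (fun i => v (inl i)) (fun j => -v (inr (inl j)))) (fun k => v (inr (inr k)))
  simp only [Fintype.sum_sum_type, Sum.elim_inl, Sum.elim_inr, neg_sq, neg_mul,
    Finset.sum_neg_distrib] at hquad
  have hvv : v ⬝ᵥ v
      = ∑ i, v (inl i) ^ 2 + ∑ j, v (inr (inl j)) ^ 2 + ∑ k, v (inr (inr k)) ^ 2 := by
    simp [dotProduct, Fintype.sum_sum_type, sq, add_assoc]
  have hχv : cliqueIndicator p q r ⬝ᵥ v = ∑ k, v (inr (inr k)) := by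
    simp [dotProduct, Fintype.sum_sum_type]
  have hvχ : v ⬝ᵥ cliqueIndicator p q r = ∑ k, v (inr (inr k)) := by
    rw [dotProduct_comm, hχv]
  simp only [star_trivial, reducedMatrix, sub_mulVec, one_mulVec, vecMulVec_mulVec,
    op_smul_eq_smul, smul_mulVec, dotProduct_sub, dotProduct_smul, smul_eq_mul, hvv, hχv, hvχ,
    dotProduct_M_mulVec hpq]
  nlinarith [hquad]

end Q

namespace EdgeSignedIso

open HoffmanGraph Sum

variable {V : Type*} {H : HoffmanGraph V} {p q r : ℕ} (φ : EdgeSignedIso H.special (Q p q r))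

def cliqueSet : Set H.Slim := φ.toEquiv ⁻¹' Set.range (inr ∘ inr)

lemma cliqueSet_nonempty (hr : 0 < r) : φ.cliqueSet.Nonempty :=
  ⟨φ.toEquiv.symm (inr (inr ⟨0, hr⟩)), by simp [cliqueSet]⟩

lemma B_addFat_cliqueSet [Finite V] (h1 : ∀ x : V, ¬ H.fat x → (H.fatNbrs x).ncard = 1)
    {W : Type*} (e : V ≃ W) (hX : φ.cliqueSet.Nonempty) :
    (H.addFat e φ.cliqueSet hX).B = (Q.reducedMatrix p q r).submatrix
      ((H.addFatSlimEquiv e φ.cliqueSet hX).symm.trans φ.toEquiv)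
      ((H.addFatSlimEquiv e φ.cliqueSet hX).symm.trans φ.toEquiv) := by
  classical
  have hχ : φ.cliqueSet.indicator 1 = Q.cliqueIndicator p q r ∘ φ.toEquiv :=
    funext fun _ => (Set.indicator_comp_right φ.toEquiv (s := Set.range _) (g := 1)).symm
  ext s t
  obtain ⟨s, rfl⟩ := (H.addFatSlimEquiv e φ.cliqueSet hX).surjective s
  obtain ⟨t, rfl⟩ := (H.addFatSlimEquiv e φ.cliqueSet hX).surjective t
  have h := congr_fun₂ (H.B_addFat_submatrix e φ.cliqueSet hX) s t
  simp only [submatrix_apply, Matrix.sub_apply, vecMulVec_apply] at h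
  rw [h, H.B_eq_submatrix_of_specialIso h1 φ, hχ]
  simp [Q.reducedMatrix, vecMulVec_apply]

end EdgeSignedIso

/-- Lemma 4.7. If every slim vertex of `H` has exactly one fat
neighbor and the special graph `S(H)` is isomorphic to `Q_{p,q,r}` with `p + q ≤ r`
and `r ≥ 2`, then `H` is `(−1−τ)`-reducible. -/
theorem statement15 {V : Type*} [Fintype V] (H : HoffmanGraph V)
    (h1 : ∀ x : V, ¬ H.fat x → (H.fatNbrs x).ncard = 1)
    (p q r : ℕ) (hpq : p + q ≤ r) (hr : 2 ≤ r)
    (hiso : Nonempty (EdgeSignedIso H.special (Q p q r))) :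
    H.AlphaReducible (-1 - (1 + Real.sqrt 5) / 2) := by
  classical
  obtain ⟨φ⟩ := hiso
  have hα : -1 - goldenRatio ≤ 0 := by linarith [goldenRatio_pos]
  have hX := φ.cliqueSet_nonempty (by omega)
  set e := Fintype.equivFin V
  set H' := H.addFat e φ.cliqueSet hX
  set ψ := (H.addFatSlimEquiv e φ.cliqueSet hX).symm.trans φ.toEquiv
  have hB' : H'.B = (Q.reducedMatrix p q r).submatrix ψ ψ := φ.B_addFat_cliqueSet h1 e hX
  have hPSD' : (H'.B - (-1 - goldenRatio) • 1).PosSemidef := by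
    rw [hB', ← submatrix_one_equiv ψ]
    exact (Q.posSemidef_reducedMatrix_sub hpq).submatrix ψ
  set c := Q.side hpq ∘ ψ
  have hD : H'.IsDecomposition (H'.slimParts c) :=
    HoffmanGraph.isDecomposition_slimParts ((Q.side_surjective hpq hr).comp ψ.surjective)
      fun s t hst => by rw [hB']; exact Q.reducedMatrix_eq_zero_of_side_ne hpq hst
  refine ⟨H.le_lamMin_of_posSemidef hα (H.posSemidef_B_sub_of_addFat e _ hX hPSD'), _,
    inferInstance, H', H.addFatEmbedding e _ hX, H'.slimParts c, hD,
    hD.le_lamMin_part hα hPSD', fun i => ?_⟩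
  obtain ⟨a, rfl⟩ := Q.side_surjective hpq hr i
  refine ⟨_, (φ.toEquiv.symm a).2, ?_⟩
  simpa [c, ψ] using H.addFatEmbedding_mem_slimParts e _ hX c (φ.toEquiv.symm a)
end
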